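/- Let E and F be real normed spaces, Ω ⊆ E an open convex set, δ > 0, θ ∈ (0,1), and k ∈ ℕ. There exists a constant C > 0 (depending only on k) such that for all functions u : Ω → ℝ and T : Ω → F that are k times continuously (Fréchet) differentiable with ‖u‖_{C^{k,θ}} < ∞ and ‖T‖_{C^{k,θ}} < ∞, one has ‖uT‖_{C^{k,θ}} ≤ C · Σ_{p=0}^{k} ( ‖u‖_{C^p}·‖T‖_{C^{k−p,θ}} + ‖u‖_{C^{p,θ}}·‖T‖_{C^{k−p}} ). -/

import Mathlib

/-!
Write `y = x + a`. Then `D^k(uT)(x) - D^k(uT)(y)` is the `k`-th derivative at `x` of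
`uT - (uT)(· + a) = (u - u(· + a)) T + u(· + a) (T - T(· + a))`, and the ordinary Leibniz bound
for `D^k` of a product, applied to both terms, controls it by
`∑ binom(k, i) (‖Δ D^i u‖ ‖D^(k-i) T‖ + ‖D^i u‖ ‖Δ D^(k-i) T‖)`. Each difference is at most a
Hölder seminorm times `‖x - y‖ ^ θ`: at order `k` by hypothesis, below it because the mean value
theorem on the convex set `Ω` makes `D^i u` Lipschitz, and Lipschitz implies `θ`-Hölder at scales
below `δ`. Binomial coefficients are bounded by `2 ^ k`.
-/

open scoped BigOperators

/-- The truncated Hölder seminorm on `Ω ⊆ E` with cut-off `δ`: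
`[g]_θ = sup_{x,y ∈ Ω, 0 < ‖x−y‖ < δ} ‖g(x) − g(y)‖ / ‖x−y‖^θ`. -/
noncomputable def holderSemiOn {E F : Type*} [NormedAddCommGroup E]
    [NormedAddCommGroup F] (δ θ : ℝ) (g : E → F) (Ω : Set E) : ℝ :=
  ⨆ p : {q : E × E // q.1 ∈ Ω ∧ q.2 ∈ Ω ∧ 0 < ‖q.1 - q.2‖ ∧ ‖q.1 - q.2‖ < δ},
    ‖g p.1.1 - g p.1.2‖ / ‖p.1.1 - p.1.2‖ ^ θ

/-- The `C^j` norm on `Ω`: `‖h‖_{C^j} = Σ_{i=0}^{j} sup_Ω ‖D^i h‖`,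
where `D^i` is the `i`-th (within-`Ω`) Fréchet derivative. -/
noncomputable def ckNormOn {E F : Type*} [NormedAddCommGroup E] [NormedSpace ℝ E]
    [NormedAddCommGroup F] [NormedSpace ℝ F] (j : ℕ) (f : E → F) (Ω : Set E) : ℝ :=
  ∑ i ∈ Finset.range (j + 1), ⨆ x : Ω, ‖iteratedFDerivWithin ℝ i f Ω x‖

/-- The `C^{j,θ}` norm on `Ω`: `‖h‖_{C^{j,θ}} = ‖h‖_{C^j} + [D^j h]_θ`. -/
noncomputable def ckHolderNormOn {E F : Type*} [NormedAddCommGroup E] [NormedSpace ℝ E]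
    [NormedAddCommGroup F] [NormedSpace ℝ F] (j : ℕ) (δ θ : ℝ) (f : E → F) (Ω : Set E) : ℝ :=
  ckNormOn j f Ω + holderSemiOn δ θ (iteratedFDerivWithin ℝ j f Ω) Ω

open Set

section Leibniz

variable {𝕜 : Type*} [NontriviallyNormedField 𝕜] {E : Type*} [NormedAddCommGroup E]
  [NormedSpace 𝕜 E] {F : Type*} [NormedAddCommGroup F] [NormedSpace 𝕜 F]
  {𝕜' : Type*} [NormedField 𝕜'] [NormedAlgebra 𝕜 𝕜'] [NormedSpace 𝕜' F]
  [IsScalarTower 𝕜 𝕜' F] {s : Set E} {n : ℕ}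

theorem norm_iteratedFDeriv_smul_le_of_isOpen {f : E → 𝕜'} {g : E → F} (hs : IsOpen s)
    (hf : ContDiffOn 𝕜 n f s) (hg : ContDiffOn 𝕜 n g s) {x : E} (hx : x ∈ s) :
    ‖iteratedFDeriv 𝕜 n (fun z => f z • g z) x‖ ≤
      ∑ i ∈ Finset.range (n + 1), (n.choose i : ℝ) * ‖iteratedFDeriv 𝕜 i f x‖ *
        ‖iteratedFDeriv 𝕜 (n - i) g x‖ := by
  simpa only [iteratedFDerivWithin_of_isOpen _ hs hx] using
    norm_iteratedFDerivWithin_smul_le hf hg hs.uniqueDiffOn hx le_rfl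

theorem iteratedFDeriv_sub_comp_add_right {G : Type*} [NormedAddCommGroup G] [NormedSpace 𝕜 G]
    {f : E → G} (hs : IsOpen s) (hf : ContDiffOn 𝕜 n f s) {x a : E} (hx : x ∈ s)
    (hxa : x + a ∈ s) {i : ℕ} (hi : i ≤ n) :
    iteratedFDeriv 𝕜 i (fun z => f z - f (z + a)) x =
      iteratedFDeriv 𝕜 i f x - iteratedFDeriv 𝕜 i f (x + a) := by
  have hfx : ContDiffAt 𝕜 i f x := (hf.contDiffAt (hs.mem_nhds hx)).of_le (by exact_mod_cast hi)
  have hfxa : ContDiffAt 𝕜 i f (x + a) :=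
    (hf.contDiffAt (hs.mem_nhds hxa)).of_le (by exact_mod_cast hi)
  have hfa : ContDiffAt 𝕜 i (fun z => f (z + a)) x :=
    hfxa.comp x (contDiffAt_id.add contDiffAt_const)
  rw [fun_iteratedFDeriv_sub_apply hfx hfa, iteratedFDeriv_comp_add_right]

theorem norm_iteratedFDerivWithin_smul_sub_le {f : E → 𝕜'} {g : E → F} (hs : IsOpen s)
    (hf : ContDiffOn 𝕜 n f s) (hg : ContDiffOn 𝕜 n g s) {x y : E} (hx : x ∈ s) (hy : y ∈ s) :
    ‖iteratedFDerivWithin 𝕜 n (fun z => f z • g z) s x -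
        iteratedFDerivWithin 𝕜 n (fun z => f z • g z) s y‖ ≤
      ∑ i ∈ Finset.range (n + 1), (n.choose i : ℝ) *
        (‖iteratedFDerivWithin 𝕜 i f s x - iteratedFDerivWithin 𝕜 i f s y‖ *
            ‖iteratedFDerivWithin 𝕜 (n - i) g s x‖ +
          ‖iteratedFDerivWithin 𝕜 i f s y‖ *
            ‖iteratedFDerivWithin 𝕜 (n - i) g s x - iteratedFDerivWithin 𝕜 (n - i) g s y‖) := by
  simp only [iteratedFDerivWithin_of_isOpen _ hs hx, iteratedFDerivWithin_of_isOpen _ hs hy]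
  obtain ⟨a, rfl⟩ : ∃ a, y = x + a := ⟨y - x, by abel⟩
  set t := s ∩ (· + a) ⁻¹' s
  have ht : IsOpen t := hs.inter (hs.preimage (continuous_id.add continuous_const))
  have hxt : x ∈ t := ⟨hx, hy⟩
  have hfa : ContDiffOn 𝕜 n (fun z => f (z + a)) t :=
    hf.comp (contDiff_id.add contDiff_const).contDiffOn fun _ hz => hz.2
  have hga : ContDiffOn 𝕜 n (fun z => g (z + a)) t :=
    hg.comp (contDiff_id.add contDiff_const).contDiffOn fun _ hz => hz.2
  have hgt : ContDiffOn 𝕜 n g t := hg.mono inter_subset_left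
  have hdf : ContDiffOn 𝕜 n (fun z => f z - f (z + a)) t := (hf.mono inter_subset_left).sub hfa
  have hdg : ContDiffOn 𝕜 n (fun z => g z - g (z + a)) t := hgt.sub hga
  have hsplit : (fun z => f z • g z - f (z + a) • g (z + a)) =
      fun z => (f z - f (z + a)) • g z + f (z + a) • (g z - g (z + a)) := by
    funext z; rw [sub_smul, smul_sub]; abel
  rw [← iteratedFDeriv_sub_comp_add_right (f := fun z => f z • g z) hs (hf.smul hg) hx hy le_rfl,
    hsplit,
    fun_iteratedFDeriv_add_apply (f := fun z => (f z - f (z + a)) • g z)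
      (g := fun z => f (z + a) • (g z - g (z + a)))
      ((hdf.smul hgt).contDiffAt (ht.mem_nhds hxt)) ((hfa.smul hdg).contDiffAt (ht.mem_nhds hxt))]
  refine (norm_add_le _ _).trans ?_
  simp only [mul_add, Finset.sum_add_distrib, ← mul_assoc]
  refine add_le_add ((norm_iteratedFDeriv_smul_le_of_isOpen ht hdf hgt hxt).trans_eq
    (Finset.sum_congr rfl fun i hi => ?_))
    ((norm_iteratedFDeriv_smul_le_of_isOpen ht hfa hdg hxt).trans_eq
    (Finset.sum_congr rfl fun i _ => ?_))
  · rw [iteratedFDeriv_sub_comp_add_right hs hf hx hy (Finset.mem_range_succ_iff.1 hi)]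
  · rw [iteratedFDeriv_comp_add_right,
      iteratedFDeriv_sub_comp_add_right hs hg hx hy (Nat.sub_le _ _)]

end Leibniz

section Holder

variable {E F : Type*} [NormedAddCommGroup E] [NormedAddCommGroup F] {Ω : Set E} {δ θ : ℝ}

/-- `holderSemiOn` is a real `⨆`, hence `0` when the quotients are unbounded; it is a genuine
supremum only under this hypothesis. -/
abbrev HolderQuotientBddOn (δ θ : ℝ) (g : E → F) (Ω : Set E) : Prop :=
  BddAbove (Set.range
    fun p : {q : E × E // q.1 ∈ Ω ∧ q.2 ∈ Ω ∧ 0 < ‖q.1 - q.2‖ ∧ ‖q.1 - q.2‖ < δ} =>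
      ‖g p.1.1 - g p.1.2‖ / ‖p.1.1 - p.1.2‖ ^ θ)

lemma holderSemiOn_nonneg (g : E → F) : 0 ≤ holderSemiOn δ θ g Ω :=
  Real.iSup_nonneg fun _ => div_nonneg (norm_nonneg _) (Real.rpow_nonneg (norm_nonneg _) θ)

lemma HolderQuotientBddOn.norm_sub_le {g : E → F} (hg : HolderQuotientBddOn δ θ g Ω) {x y : E}
    (hx : x ∈ Ω) (hy : y ∈ Ω) (hxy : 0 < ‖x - y‖) (hxyδ : ‖x - y‖ < δ) :
    ‖g x - g y‖ ≤ holderSemiOn δ θ g Ω * ‖x - y‖ ^ θ :=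
  (div_le_iff₀ (Real.rpow_pos_of_pos hxy θ)).1 (le_ciSup hg ⟨(x, y), hx, hy, hxy, hxyδ⟩)

lemma LipschitzOnWith.holderQuotientBddOn {g : E → F} {K : NNReal} (hg : LipschitzOnWith K g Ω)
    (hθ : θ ≤ 1) : HolderQuotientBddOn δ θ g Ω := by
  refine ⟨K * δ ^ (1 - θ), ?_⟩
  rintro _ ⟨⟨⟨x, y⟩, hx, hy, hxy, hxyδ⟩, rfl⟩
  dsimp only
  rw [div_le_iff₀ (Real.rpow_pos_of_pos hxy θ)]
  have hsplit : ‖x - y‖ = ‖x - y‖ ^ (1 - θ) * ‖x - y‖ ^ θ := by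
    rw [← Real.rpow_add hxy, sub_add_cancel, Real.rpow_one]
  calc ‖g x - g y‖ ≤ K * ‖x - y‖ := hg.norm_sub_le hx hy
    _ = K * (‖x - y‖ ^ (1 - θ) * ‖x - y‖ ^ θ) := by rw [← hsplit]
    _ ≤ K * (δ ^ (1 - θ) * ‖x - y‖ ^ θ) := by gcongr
    _ = K * δ ^ (1 - θ) * ‖x - y‖ ^ θ := by ring

end Holder

section Norms

variable {E F : Type*} [NormedAddCommGroup E] [NormedSpace ℝ E]
  [NormedAddCommGroup F] [NormedSpace ℝ F] {Ω : Set E} {δ θ : ℝ}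

lemma ckNormOn_nonneg (j : ℕ) (f : E → F) : 0 ≤ ckNormOn j f Ω :=
  Finset.sum_nonneg fun _ _ => Real.iSup_nonneg fun _ => norm_nonneg _

lemma ckNormOn_le_ckHolderNormOn (j : ℕ) (f : E → F) :
    ckNormOn j f Ω ≤ ckHolderNormOn j δ θ f Ω :=
  le_add_of_nonneg_right (holderSemiOn_nonneg _)

lemma holderSemiOn_le_ckHolderNormOn (j : ℕ) (f : E → F) :
    holderSemiOn δ θ (iteratedFDerivWithin ℝ j f Ω) Ω ≤ ckHolderNormOn j δ θ f Ω :=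
  le_add_of_nonneg_left (ckNormOn_nonneg j f)

lemma norm_iteratedFDerivWithin_le_ckNormOn {f : E → F} {i j : ℕ}
    (hf : BddAbove (Set.range fun x : Ω => ‖iteratedFDerivWithin ℝ i f Ω x‖)) (hij : i ≤ j)
    {x : E} (hx : x ∈ Ω) : ‖iteratedFDerivWithin ℝ i f Ω x‖ ≤ ckNormOn j f Ω :=
  (le_ciSup hf ⟨x, hx⟩).trans <|
    Finset.single_le_sum (f := fun i => ⨆ x : Ω, ‖iteratedFDerivWithin ℝ i f Ω x‖)
      (fun _ _ => Real.iSup_nonneg fun _ => norm_nonneg _) (Finset.mem_range_succ_iff.2 hij)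

lemma holderQuotientBddOn_iteratedFDerivWithin {f : E → F} {k : ℕ} (hΩ : UniqueDiffOn ℝ Ω)
    (hconv : Convex ℝ Ω) (hθ : θ ≤ 1) (hf : ContDiffOn ℝ k f Ω)
    (hbdd : ∀ i ≤ k, BddAbove (Set.range fun x : Ω => ‖iteratedFDerivWithin ℝ i f Ω x‖))
    (hk : HolderQuotientBddOn δ θ (iteratedFDerivWithin ℝ k f Ω) Ω) :
    ∀ i ≤ k, HolderQuotientBddOn δ θ (iteratedFDerivWithin ℝ i f Ω) Ω := by
  intro i hik
  obtain rfl | hik := eq_or_lt_of_le hik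
  · exact hk
  set M := ⨆ x : Ω, ‖iteratedFDerivWithin ℝ (i + 1) f Ω x‖
  have hM : 0 ≤ M := Real.iSup_nonneg fun _ => norm_nonneg _
  have hdiff : DifferentiableOn ℝ (iteratedFDerivWithin ℝ i f Ω) Ω :=
    hf.differentiableOn_iteratedFDerivWithin (by exact_mod_cast hik) hΩ
  have hlip : LipschitzOnWith M.toNNReal (iteratedFDerivWithin ℝ i f Ω) Ω := by
    refine Convex.lipschitzOnWith_of_nnnorm_fderivWithin_le hdiff (fun x hx => ?_) hconv
    rw [Real.le_toNNReal_iff_coe_le hM, coe_nnnorm, norm_fderivWithin_iteratedFDerivWithin]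
    exact le_ciSup (hbdd (i + 1) hik) ⟨x, hx⟩
  exact hlip.holderQuotientBddOn hθ

end Norms

section Product

variable {E F : Type*} [NormedAddCommGroup E] [NormedSpace ℝ E]
  [NormedAddCommGroup F] [NormedSpace ℝ F] {Ω : Set E} {δ θ : ℝ} {k : ℕ} {u : E → ℝ} {T : E → F}

lemma choose_le_two_pow_of_le {j : ℕ} (i : ℕ) (hj : j ≤ k) : (j.choose i : ℝ) ≤ 2 ^ k := by
  exact_mod_cast (Nat.choose_le_two_pow j i).trans (Nat.pow_le_pow_right two_pos hj)

lemma iSup_norm_iteratedFDerivWithin_smul_le (hΩ : UniqueDiffOn ℝ Ω) (hu : ContDiffOn ℝ k u Ω)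
    (hT : ContDiffOn ℝ k T Ω)
    (hbu : ∀ i ≤ k, BddAbove (Set.range fun x : Ω => ‖iteratedFDerivWithin ℝ i u Ω x‖))
    (hbT : ∀ i ≤ k, BddAbove (Set.range fun x : Ω => ‖iteratedFDerivWithin ℝ i T Ω x‖))
    {j : ℕ} (hj : j ≤ k) :
    ⨆ x : Ω, ‖iteratedFDerivWithin ℝ j (fun x => u x • T x) Ω x‖ ≤
      2 ^ k * ∑ p ∈ Finset.range (k + 1), ckNormOn p u Ω * ckNormOn (k - p) T Ω := by
  have hterm : ∀ p, 0 ≤ ckNormOn p u Ω * ckNormOn (k - p) T Ω := fun p =>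
    mul_nonneg (ckNormOn_nonneg _ _) (ckNormOn_nonneg _ _)
  refine Real.iSup_le (fun ⟨z, hz⟩ => ?_)
    (mul_nonneg (by positivity) (Finset.sum_nonneg fun p _ => hterm p))
  rw [Finset.mul_sum]
  refine (norm_iteratedFDerivWithin_smul_le hu hT hΩ hz (by exact_mod_cast hj)).trans <|
    (Finset.sum_le_sum fun i hi => ?_).trans <|
      Finset.sum_le_sum_of_subset_of_nonneg (Finset.range_subset_range.2 (by omega))
        fun p _ _ => mul_nonneg (by positivity) (hterm p)
  have hij : i ≤ j := Finset.mem_range_succ_iff.1 hi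
  have hu' := norm_iteratedFDerivWithin_le_ckNormOn (hbu i (hij.trans hj)) le_rfl hz
  have hT' := norm_iteratedFDerivWithin_le_ckNormOn (hbT (j - i) (by omega))
    (Nat.sub_le_sub_right hj i) hz
  have hc := choose_le_two_pow_of_le i hj
  have hNu : 0 ≤ ckNormOn i u Ω := ckNormOn_nonneg i u
  rw [← mul_assoc]
  gcongr

lemma ckNormOn_smul_le (hΩ : UniqueDiffOn ℝ Ω) (hu : ContDiffOn ℝ k u Ω)
    (hT : ContDiffOn ℝ k T Ω)
    (hbu : ∀ i ≤ k, BddAbove (Set.range fun x : Ω => ‖iteratedFDerivWithin ℝ i u Ω x‖))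
    (hbT : ∀ i ≤ k, BddAbove (Set.range fun x : Ω => ‖iteratedFDerivWithin ℝ i T Ω x‖)) :
    ckNormOn k (fun x => u x • T x) Ω ≤
      (k + 1) * (2 ^ k * ∑ p ∈ Finset.range (k + 1), ckNormOn p u Ω * ckNormOn (k - p) T Ω) :=
  (Finset.sum_le_sum fun _ hj => iSup_norm_iteratedFDerivWithin_smul_le hΩ hu hT hbu hbT
    (Finset.mem_range_succ_iff.1 hj)).trans_eq (by simp)

lemma holderSemiOn_iteratedFDerivWithin_smul_le (hΩ : IsOpen Ω) (hu : ContDiffOn ℝ k u Ω)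
    (hT : ContDiffOn ℝ k T Ω)
    (hbu : ∀ i ≤ k, BddAbove (Set.range fun x : Ω => ‖iteratedFDerivWithin ℝ i u Ω x‖))
    (hbT : ∀ i ≤ k, BddAbove (Set.range fun x : Ω => ‖iteratedFDerivWithin ℝ i T Ω x‖))
    (hHu : ∀ i ≤ k, HolderQuotientBddOn δ θ (iteratedFDerivWithin ℝ i u Ω) Ω)
    (hHT : ∀ i ≤ k, HolderQuotientBddOn δ θ (iteratedFDerivWithin ℝ i T Ω) Ω) :
    holderSemiOn δ θ (iteratedFDerivWithin ℝ k (fun x => u x • T x) Ω) Ω ≤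
      2 ^ k * ∑ p ∈ Finset.range (k + 1),
        (ckNormOn p u Ω * holderSemiOn δ θ (iteratedFDerivWithin ℝ (k - p) T Ω) Ω +
          holderSemiOn δ θ (iteratedFDerivWithin ℝ p u Ω) Ω * ckNormOn (k - p) T Ω) := by
  refine Real.iSup_le (fun p => ?_) <|
    mul_nonneg (by positivity) <| Finset.sum_nonneg fun p _ => add_nonneg
      (mul_nonneg (ckNormOn_nonneg _ _) (holderSemiOn_nonneg _))
      (mul_nonneg (holderSemiOn_nonneg _) (ckNormOn_nonneg _ _))
  obtain ⟨⟨x, y⟩, hx, hy, hxy, hxyδ⟩ := p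
  rw [div_le_iff₀ (Real.rpow_pos_of_pos hxy θ), Finset.mul_sum, Finset.sum_mul]
  refine (norm_iteratedFDerivWithin_smul_sub_le hΩ hu hT hx hy).trans
    (Finset.sum_le_sum fun i hi => ?_)
  have hik : i ≤ k := Finset.mem_range_succ_iff.1 hi
  have hΔu := (hHu i hik).norm_sub_le hx hy hxy hxyδ
  have hΔT := (hHT (k - i) (Nat.sub_le k i)).norm_sub_le hx hy hxy hxyδ
  have hu' := norm_iteratedFDerivWithin_le_ckNormOn (hbu i hik) le_rfl hy
  have hT' := norm_iteratedFDerivWithin_le_ckNormOn (hbT (k - i) (Nat.sub_le k i)) le_rfl hx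
  have hc := choose_le_two_pow_of_le i (le_refl k)
  have hNu : 0 ≤ ckNormOn i u Ω := ckNormOn_nonneg i u
  have hHu0 : 0 ≤ holderSemiOn δ θ (iteratedFDerivWithin ℝ i u Ω) Ω := holderSemiOn_nonneg _
  calc _ ≤ 2 ^ k * (holderSemiOn δ θ (iteratedFDerivWithin ℝ i u Ω) Ω * ‖x - y‖ ^ θ *
          ckNormOn (k - i) T Ω + ckNormOn i u Ω *
            (holderSemiOn δ θ (iteratedFDerivWithin ℝ (k - i) T Ω) Ω * ‖x - y‖ ^ θ)) := by
        gcongr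
    _ = _ := by ring

end Product

/-- Product estimate for `C^{k,θ}` norms on an open convex set: there is `C > 0`
depending only on `k` such that
`‖uT‖_{C^{k,θ}} ≤ C · Σ_{p=0}^{k} (‖u‖_{C^p}·‖T‖_{C^{k−p,θ}} + ‖u‖_{C^{p,θ}}·‖T‖_{C^{k−p}})`. -/
theorem ck_holder_product_estimate (k : ℕ) :
    ∃ C : ℝ, 0 < C ∧
      ∀ (E F : Type*) [NormedAddCommGroup E] [NormedSpace ℝ E]
        [NormedAddCommGroup F] [NormedSpace ℝ F]
        (Ω : Set E), IsOpen Ω → Convex ℝ Ω →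
        ∀ (δ θ : ℝ), 0 < δ → θ ∈ Set.Ioo (0 : ℝ) 1 →
        ∀ (u : E → ℝ) (T : E → F),
          ContDiffOn ℝ k u Ω → ContDiffOn ℝ k T Ω →
          (∀ i ≤ k, BddAbove (Set.range fun x : Ω => ‖iteratedFDerivWithin ℝ i u Ω x‖)) →
          BddAbove (Set.range
            fun p : {q : E × E // q.1 ∈ Ω ∧ q.2 ∈ Ω ∧ 0 < ‖q.1 - q.2‖ ∧ ‖q.1 - q.2‖ < δ} =>
              ‖iteratedFDerivWithin ℝ k u Ω p.1.1 - iteratedFDerivWithin ℝ k u Ω p.1.2‖ /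
                ‖p.1.1 - p.1.2‖ ^ θ) →
          (∀ i ≤ k, BddAbove (Set.range fun x : Ω => ‖iteratedFDerivWithin ℝ i T Ω x‖)) →
          BddAbove (Set.range
            fun p : {q : E × E // q.1 ∈ Ω ∧ q.2 ∈ Ω ∧ 0 < ‖q.1 - q.2‖ ∧ ‖q.1 - q.2‖ < δ} =>
              ‖iteratedFDerivWithin ℝ k T Ω p.1.1 - iteratedFDerivWithin ℝ k T Ω p.1.2‖ /
                ‖p.1.1 - p.1.2‖ ^ θ) →
          ckHolderNormOn k δ θ (fun x => u x • T x) Ω ≤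
            C * ∑ p ∈ Finset.range (k + 1),
              (ckNormOn p u Ω * ckHolderNormOn (k - p) δ θ T Ω +
                ckHolderNormOn p δ θ u Ω * ckNormOn (k - p) T Ω) := by
  refine ⟨(k + 2) * 2 ^ k, by positivity, ?_⟩
  intro E F _ _ _ _ Ω hΩ hconv δ θ _ hθ u T hu hT hbu hHu hbT hHT
  set S := ∑ p ∈ Finset.range (k + 1),
    (ckNormOn p u Ω * ckHolderNormOn (k - p) δ θ T Ω +
      ckHolderNormOn p δ θ u Ω * ckNormOn (k - p) T Ω)
  have hCk : ∑ p ∈ Finset.range (k + 1), ckNormOn p u Ω * ckNormOn (k - p) T Ω ≤ S :=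
    Finset.sum_le_sum fun p _ => le_add_of_le_of_nonneg
      (mul_le_mul_of_nonneg_left (ckNormOn_le_ckHolderNormOn _ _) (ckNormOn_nonneg _ _))
      (mul_nonneg ((ckNormOn_nonneg _ _).trans (ckNormOn_le_ckHolderNormOn _ _))
        (ckNormOn_nonneg _ _))
  have hHolder : ∑ p ∈ Finset.range (k + 1),
      (ckNormOn p u Ω * holderSemiOn δ θ (iteratedFDerivWithin ℝ (k - p) T Ω) Ω +
        holderSemiOn δ θ (iteratedFDerivWithin ℝ p u Ω) Ω * ckNormOn (k - p) T Ω) ≤ S :=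
    Finset.sum_le_sum fun p _ => add_le_add
      (mul_le_mul_of_nonneg_left (holderSemiOn_le_ckHolderNormOn _ _) (ckNormOn_nonneg _ _))
      (mul_le_mul_of_nonneg_right (holderSemiOn_le_ckHolderNormOn _ _) (ckNormOn_nonneg _ _))
  calc ckHolderNormOn k δ θ (fun x => u x • T x) Ω
      ≤ (k + 1) * (2 ^ k * S) + 2 ^ k * S := by
        refine add_le_add ?_ ?_
        · exact (ckNormOn_smul_le hΩ.uniqueDiffOn hu hT hbu hbT).trans (by gcongr)
        · exact (holderSemiOn_iteratedFDerivWithin_smul_le hΩ hu hT hbu hbT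
            (holderQuotientBddOn_iteratedFDerivWithin hΩ.uniqueDiffOn hconv hθ.2.le hu hbu hHu)
            (holderQuotientBddOn_iteratedFDerivWithin hΩ.uniqueDiffOn hconv hθ.2.le hT hbT hHT)
            ).trans (by gcongr)
    _ = (k + 2) * 2 ^ k * S := by ring
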